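/- Let k be an algebraically closed field of characteristic 2 and let f = w*z^2 + x^3 + y^2*z + x*y*z ∈ k[x,y,z,w]. Then f ∉ (x^2, y^2, z^2, w^2); consequently, by Fedder's criterion, the cubic surface {w z^2 + x^3 + y^2 z + x y z = 0} in P^3 (the del Pezzo surface of degree 3 with singularity type E_6^1 in characteristic 2) is Frobenius split. -/

import Mathlib

/-!
The easy direction of Fedder's criterion. On `S = k[x₁, …, xₙ]` over a perfect field the
trace `Φ` of Frobenius, `c xᵐ ↦ c^{1/p} x^{(m - (p-1))/p}` when every `mᵢ ≡ p - 1 (mod p)`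
and `↦ 0` otherwise, satisfies `Φ (aᵖ b) = a Φ b`. Hence whenever `Φ (f^{p-1} u) = 1`, the map
`b ↦ Φ (f^{p-1} u b)` descends to a Frobenius splitting of `S ⧸ (f)`, because
`f^{p-1} · f = fᵖ`. If `f` is homogeneous and `f^{p-1}` has a monomial `c xᵐ` with all
`mᵢ < p`, the choice `u = x^{(p-1) - m} / c` works: `f^{p-1} u` is homogeneous of degree
`n (p - 1)`, and its only monomial with all exponents `≡ p - 1` is `x^{p-1}`, with
coefficient `1`. For the cubic at hand `p = 2` and that monomial is `xyz`.
-/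

open MvPolynomial

/-- A ring `R` of characteristic `p` is Frobenius split if the Frobenius `R → R, r ↦ rᵖ`
admits a splitting, i.e. an additive map `σ : R → R` with `σ 1 = 1` and
`σ (aᵖ · b) = a · σ b`.  For the homogeneous coordinate ring of a Du Val del Pezzo
surface this is equivalent to (global) Frobenius splitting of the surface. -/
def IsFrobeniusSplitRing (p : ℕ) (R : Type*) [CommRing R] : Prop :=
  ∃ σ : R →+ R, σ 1 = 1 ∧ ∀ a b : R, σ (a ^ p * b) = a * σ b

namespace MvPolynomial

theorem mem_ideal_span_range_X_pow_iff {σ R : Type*} [CommSemiring R] {g : MvPolynomial σ R}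
    {n : ℕ} :
    g ∈ Ideal.span (Set.range fun i => (X i : MvPolynomial σ R) ^ n) ↔
      ∀ m ∈ g.support, ∃ i, n ≤ m i := by
  have hmon : (Set.range fun i => (X i : MvPolynomial σ R) ^ n) =
      (fun s => monomial s 1) '' Set.range fun i => Finsupp.single i n := by
    rw [← Set.range_comp]
    simp only [Function.comp_def, X_pow_eq_monomial]
  simp [hmon, mem_ideal_span_monomial_image, Finsupp.single_le_iff]

open Classical in
noncomputable def frobeniusTrace {σ : Type*} (k : Type*) [CommRing k] (p : ℕ) [ExpChar k p]
    [PerfectRing k p] : MvPolynomial σ k →+ MvPolynomial σ k :=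
  (Finsupp.liftAddHom fun m : σ →₀ ℕ =>
    if ∀ i, m i % p = p - 1 then
      (monomial (m ⌊/⌋ p)).toAddMonoidHom.comp (frobeniusEquiv k p).symm.toAddMonoidHom
    else 0).comp AddMonoidAlgebra.coeffAddEquiv.toAddMonoidHom

variable {σ k : Type*} [CommRing k] {p : ℕ} [ExpChar k p] [PerfectRing k p]

open Classical in
theorem frobeniusTrace_monomial (m : σ →₀ ℕ) (c : k) :
    frobeniusTrace k p (monomial m c) =
      if ∀ i, m i % p = p - 1 then monomial (m ⌊/⌋ p) ((frobeniusEquiv k p).symm c)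
      else 0 := by
  rw [← single_eq_monomial]
  exact (Finsupp.liftAddHom_apply_single _ m c).trans (by split_ifs <;> rfl)

theorem frobeniusTrace_monomial_pow_mul (m n : σ →₀ ℕ) (c d : k) :
    frobeniusTrace k p (monomial m c ^ p * monomial n d) =
      monomial m c * frobeniusTrace k p (monomial n d) := by
  have hp : 0 < p := expChar_pos k p
  have hmod : (∀ i, (p • m + n) i % p = p - 1) ↔ ∀ i, n i % p = p - 1 := by
    simp [Nat.add_mod]
  have hdiv : (p • m + n) ⌊/⌋ p = m + n ⌊/⌋ p := by
    ext i
    simp [Nat.add_mul_div_left _ _ hp, Nat.add_comm]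
  have hroot : (frobeniusEquiv k p).symm (c ^ p * d) = c * (frobeniusEquiv k p).symm d := by
    rw [map_mul, ← frobenius_def, frobeniusEquiv_symm_apply_frobenius]
  rw [monomial_pow, monomial_mul, frobeniusTrace_monomial, frobeniusTrace_monomial]
  by_cases h : ∀ i, n i % p = p - 1
  · rw [if_pos (hmod.mpr h), if_pos h, hdiv, hroot, monomial_mul]
  · rw [if_neg (mt hmod.mp h), if_neg h, mul_zero]

theorem frobeniusTrace_pow_mul (a b : MvPolynomial σ k) :
    frobeniusTrace k p (a ^ p * b) = a * frobeniusTrace k p b := by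
  induction a using MvPolynomial.induction_on' with
  | add a₁ a₂ h₁ h₂ => rw [add_pow_expChar, add_mul, map_add, h₁, h₂, add_mul]
  | monomial m c =>
    induction b using MvPolynomial.induction_on' with
    | add b₁ b₂ h₁ h₂ => rw [mul_add, map_add, h₁, h₂, map_add, mul_add]
    | monomial n d => exact frobeniusTrace_monomial_pow_mul m n c d

theorem isFrobeniusSplitRing_quotient_of_frobeniusTrace_eq_one {f u : MvPolynomial σ k}
    (hu : frobeniusTrace k p (f ^ (p - 1) * u) = 1) :
    IsFrobeniusSplitRing p (MvPolynomial σ k ⧸ Ideal.span {f}) := by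
  set I := Ideal.span {f}
  let φ : MvPolynomial σ k →+ MvPolynomial σ k ⧸ I :=
    (Ideal.Quotient.mk I).toAddMonoidHom.comp
      ((frobeniusTrace k p).comp (AddMonoidHom.mulLeft (f ^ (p - 1) * u)))
  have hφ (a : MvPolynomial σ k) :
      φ a = Ideal.Quotient.mk I (frobeniusTrace k p (f ^ (p - 1) * u * a)) := rfl
  have hker : I.toAddSubgroup ≤ φ.ker := by
    intro a ha
    obtain ⟨s, rfl⟩ := Ideal.mem_span_singleton'.mp ha
    have : f ^ (p - 1) * u * (s * f) = f ^ p * (u * s) := by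
      rw [← pow_sub_one_mul (expChar_pos k p).ne']; ring
    rw [AddMonoidHom.mem_ker, hφ, this, frobeniusTrace_pow_mul, Ideal.Quotient.eq_zero_iff_mem]
    exact Ideal.mul_mem_right _ _ (Ideal.mem_span_singleton_self f)
  refine ⟨QuotientAddGroup.lift I.toAddSubgroup φ hker, ?_, ?_⟩
  · show φ 1 = 1
    rw [hφ, mul_one, hu, map_one]
  · rintro ⟨a⟩ ⟨b⟩
    show φ (a ^ p * b) = Ideal.Quotient.mk I a * φ b
    rw [hφ, hφ, mul_left_comm, frobeniusTrace_pow_mul, map_mul]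

variable [Fintype σ]

theorem frobeniusTrace_eq_C_of_isHomogeneous {g : MvPolynomial σ k}
    (hg : g.IsHomogeneous (Fintype.card σ * (p - 1))) :
    frobeniusTrace k p g =
      C ((frobeniusEquiv k p).symm (coeff (Finsupp.equivFunOnFinite.symm fun _ => p - 1) g)) := by
  set ρ : σ →₀ ℕ := Finsupp.equivFunOnFinite.symm fun _ => p - 1
  have hp : 0 < p := expChar_pos k p
  have hρ : ∀ i, ρ i % p = p - 1 := fun i => Nat.mod_eq_of_lt (Nat.sub_lt hp one_pos)
  have hunique (m : σ →₀ ℕ) (hm : coeff m g ≠ 0) (hmod : ∀ i, m i % p = p - 1) :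
      m = ρ := by
    have hle : ∀ i ∈ Finset.univ, p - 1 ≤ m i := fun i _ => hmod i ▸ Nat.mod_le _ _
    have hdeg : ∑ _i : σ, (p - 1) = ∑ i, m i := by
      rw [← Finsupp.degree_eq_sum, not_not.mp (mt hg.coeff_eq_zero hm)]
      simp
    ext i
    exact ((Finset.sum_eq_sum_iff_of_le hle).mp hdeg i (Finset.mem_univ i)).symm
  conv_lhs => rw [g.as_sum, map_sum]
  rw [Finset.sum_eq_single ρ]
  · have hdiv : ρ ⌊/⌋ p = 0 := by
      ext i
      simp [ρ, Nat.div_eq_of_lt (Nat.sub_lt hp one_pos)]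
    rw [frobeniusTrace_monomial, if_pos hρ, hdiv, monomial_zero']
  · intro m hm hmρ
    rw [frobeniusTrace_monomial, if_neg (mt (hunique m (mem_support_iff.mp hm)) hmρ)]
  · intro hρ
    rw [notMem_support_iff.mp hρ, monomial_zero, map_zero]

theorem isFrobeniusSplitRing_quotient_of_isHomogeneous {K : Type*} [Field K] [ExpChar K p]
    [PerfectRing K p] {f : MvPolynomial σ K} {d : ℕ} (hf : f.IsHomogeneous d)
    (hfp : f ^ (p - 1) ∉ Ideal.span (Set.range fun i => (X i : MvPolynomial σ K) ^ p)) :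
    IsFrobeniusSplitRing p (MvPolynomial σ K ⧸ Ideal.span {f}) := by
  set F := f ^ (p - 1)
  set ρ : σ →₀ ℕ := Finsupp.equivFunOnFinite.symm fun _ => p - 1
  obtain ⟨m, hm, hmp⟩ : ∃ m ∈ F.support, ∀ i, m i < p := by
    simpa [mem_ideal_span_range_X_pow_iff] using hfp
  have hmρ : m ≤ ρ := fun i => Nat.le_sub_one_of_lt (hmp i)
  set u := monomial (ρ - m) (coeff m F)⁻¹
  have hdeg : d * (p - 1) + (ρ - m).degree = Fintype.card σ * (p - 1) := by
    rw [← not_not.mp (mt (hf.pow (p - 1)).coeff_eq_zero (mem_support_iff.mp hm)), ← map_add,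
      add_tsub_cancel_of_le hmρ, Finsupp.degree_eq_sum]
    simp [ρ]
  have hFu : (F * u).IsHomogeneous (Fintype.card σ * (p - 1)) :=
    hdeg ▸ (hf.pow (p - 1)).mul (isHomogeneous_monomial _ rfl)
  refine isFrobeniusSplitRing_quotient_of_frobeniusTrace_eq_one (u := u) ?_
  rw [frobeniusTrace_eq_C_of_isHomogeneous hFu, coeff_mul_monomial', if_pos tsub_le_self,
    tsub_tsub_cancel_of_le hmρ, mul_inv_cancel₀ (mem_support_iff.mp hm), map_one, C_1]

end MvPolynomial

noncomputable def e6Cubic (k : Type*) [CommRing k] : MvPolynomial (Fin 4) k :=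
  X 3 * X 2 ^ 2 + X 0 ^ 3 + X 1 ^ 2 * X 2 + X 0 * X 1 * X 2

theorem isHomogeneous_e6Cubic (k : Type*) [CommRing k] : (e6Cubic k).IsHomogeneous 3 :=
  (((isHomogeneous_X k 3).mul (isHomogeneous_X_pow 2 2)).add (isHomogeneous_X_pow 0 3)).add
    ((isHomogeneous_X_pow 1 2).mul (isHomogeneous_X k 2)) |>.add
    (((isHomogeneous_X k 0).mul (isHomogeneous_X k 1)).mul (isHomogeneous_X k 2))

theorem coeff_xyz_e6Cubic (k : Type*) [CommRing k] :
    coeff (Finsupp.single 0 1 + Finsupp.single 1 1 + Finsupp.single 2 1) (e6Cubic k) = 1 := by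
  simp only [e6Cubic, X_pow_eq_monomial]
  simp only [X, monomial_mul, coeff_add, coeff_monomial]
  simp [Finsupp.ext_iff, Fin.forall_fin_succ]

theorem e6Cubic_notMem_span_X_sq (k : Type*) [CommRing k] [Nontrivial k] :
    e6Cubic k ∉ Ideal.span (Set.range fun i => (X i : MvPolynomial (Fin 4) k) ^ 2) := by
  simp only [mem_ideal_span_range_X_pow_iff, not_forall, not_exists, not_le]
  refine ⟨_, mem_support_iff.mpr ((coeff_xyz_e6Cubic k).symm ▸ one_ne_zero), fun i => ?_⟩
  fin_cases i <;> simp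

/-- Let `k` be algebraically closed of characteristic 2 and
`f = w·z² + x³ + y²·z + x·y·z ∈ k[x,y,z,w]`.  Then `f ∉ (x², y², z², w²)`; consequently,
by Fedder's criterion, the cubic surface `{w·z² + x³ + y²·z + x·y·z = 0} ⊆ ℙ³` (the del
Pezzo surface of degree 3 of type `E₆¹` in characteristic 2) is Frobenius split. -/
theorem fedder_E6_1_char2 (k : Type*) [Field k] [IsAlgClosed k] [CharP k 2] :
    (X 3 * X 2 ^ 2 + X 0 ^ 3 + X 1 ^ 2 * X 2 + X 0 * X 1 * X 2 : MvPolynomial (Fin 4) k) ∉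
      Ideal.span {(X 0 : MvPolynomial (Fin 4) k) ^ 2, X 1 ^ 2, X 2 ^ 2, X 3 ^ 2} ∧
    IsFrobeniusSplitRing 2
      (MvPolynomial (Fin 4) k ⧸
        Ideal.span
          {(X 3 * X 2 ^ 2 + X 0 ^ 3 + X 1 ^ 2 * X 2 + X 0 * X 1 * X 2 :
              MvPolynomial (Fin 4) k)}) := by
  change e6Cubic k ∉ _ ∧ IsFrobeniusSplitRing 2 (_ ⧸ Ideal.span {e6Cubic k})
  have hrange : ({X 0 ^ 2, X 1 ^ 2, X 2 ^ 2, X 3 ^ 2} : Set (MvPolynomial (Fin 4) k)) =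
      Set.range fun i => X i ^ 2 := by
    simp [Set.ext_iff, Fin.exists_fin_succ, eq_comm]
  have hf := e6Cubic_notMem_span_X_sq k
  refine ⟨hrange ▸ hf, ?_⟩
  exact isFrobeniusSplitRing_quotient_of_isHomogeneous (isHomogeneous_e6Cubic k)
    (by simpa using hf)
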